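/- Let T be an in-order-labeled binary search tree on {1,...,n}. For each vertex v labeled i, set T(i) = M(t_i, s_i), where t_i and s_i are the minimal and maximal labels in the subtree of v. If v has left child labeled j, then T(j) is isomorphic to the quotient of T(i) by the image of the natural embedding Δ(i) = M(i, s_i) ↪ M(t_i, s_i); in particular there is a short exact sequence 0 → Δ(i) → T(i) → T(j) → 0 of representations of the quiver 1 → ... → n. -/

import Mathlib

/-- Binary trees with vertices labeled by natural numbers. -/
inductive LTree where
  | leaf : LTree
  | node : LTree → ℕ → LTree → LTree

namespace LTree

/-- The in-order traversal list of labels. -/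
def toList : LTree → List ℕ
  | leaf => []
  | node l k r => toList l ++ k :: toList r

/-- The binary search tree property. -/
def IsBST : LTree → Prop
  | leaf => True
  | node l k r => (∀ x ∈ toList l, x < k) ∧ (∀ x ∈ toList r, k < x) ∧ IsBST l ∧ IsBST r

/-- `Subtree s t` means `s` is the subtree of `t` rooted at some vertex of `t`. -/
inductive Subtree : LTree → LTree → Prop
  | refl (t : LTree) : Subtree t t
  | left {s l r : LTree} {k : ℕ} : Subtree s l → Subtree s (node l k r)
  | right {s l r : LTree} {k : ℕ} : Subtree s r → Subtree s (node l k r)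

/-- The label of the root. -/
def rootLabel : LTree → Option ℕ
  | leaf => none
  | node _ k _ => some k

/-- The maximal label in a tree (0 for the empty tree). -/
def sMax (t : LTree) : ℕ := t.toList.foldr max 0

/-- The minimal label in a nonempty tree. -/
def sMin (t : LTree) : ℕ := t.toList.foldr min (sMax t)

end LTree
/-- The support of the interval representation `M(i,j)` of the linear quiver
`1 → 2 → ⋯ → n`: the vertex space at `k` is `K` if `i ≤ k ≤ j` and `0` otherwise. -/
def supp (i j k : ℕ) : Prop := i ≤ k ∧ k ≤ j

/-- The scalar describing the arrow map `k → k+1` of `M(i,j)`: it is the identity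
(scalar `1`) when both endpoints lie in the support, and `0` otherwise. -/
def arrS (K : Type) [Field K] (i j k : ℕ) : K := if i ≤ k ∧ k + 1 ≤ j then 1 else 0

/-- The space of morphisms of representations `M(i₁,j₁) → M(i₂,j₂)`: since every
vertex space is `K` or `0`, a morphism is a family of scalars `c k`, vanishing
wherever source or target vanishes, and commuting with the arrow maps. -/
def HomSet (K : Type) [Field K] (i₁ j₁ i₂ j₂ : ℕ) : Submodule K (ℕ → K) where
  carrier := {c | (∀ k, ¬(supp i₁ j₁ k ∧ supp i₂ j₂ k) → c k = 0) ∧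
    ∀ k, arrS K i₂ j₂ k * c k = c (k + 1) * arrS K i₁ j₁ k}
  zero_mem' := ⟨fun _ _ => rfl, fun _ => by simp⟩
  add_mem' := by
    rintro a b ⟨ha1, ha2⟩ ⟨hb1, hb2⟩
    refine ⟨fun k hk => ?_, fun k => ?_⟩
    · show a k + b k = 0
      rw [ha1 k hk, hb1 k hk, add_zero]
    · show arrS K i₂ j₂ k * (a k + b k) = (a (k + 1) + b (k + 1)) * arrS K i₁ j₁ k
      rw [mul_add, add_mul, ha2 k, hb2 k]
  smul_mem' := by
    rintro t a ⟨ha1, ha2⟩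
    refine ⟨fun k hk => ?_, fun k => ?_⟩
    · show t * a k = 0
      rw [ha1 k hk, mul_zero]
    · show arrS K i₂ j₂ k * (t * a k) = t * a (k + 1) * arrS K i₁ j₁ k
      rw [mul_left_comm, ha2 k, ← mul_assoc]

/-!
The subtree at a vertex of an in-order labelled tree carries a contiguous block of labels, so
the subtree at the vertex labelled `i` has labels `t, …, s` with the left subtree carrying
`t, …, i - 1`. Hence `T(i) = M(t, s)`, `T(j) = M(t, i - 1)` and `Δ(i) = M(i, s)`, and the
sequence `0 → M(i, s) → M(t, s) → M(t, i - 1) → 0` is given on each vertex by identities on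
the supports: the interval `[t, s]` is the disjoint union of `[i, s]` and `[t, i - 1]`.
-/

theorem List.IsInfix.exists_eq_range' {L : List ℕ} {a n : ℕ} (h : L <:+: List.range' a n) :
    ∃ b, L = List.range' b L.length := by
  obtain ⟨u, v, huv⟩ := h
  obtain ⟨k, -, huL, -⟩ := List.range'_eq_append_iff.mp huv.symm
  obtain ⟨k', -, -, hL⟩ := List.range'_eq_append_iff.mp huL.symm
  exact ⟨_, by rw [hL, List.length_range']⟩

theorem List.foldr_max_zero_range' (b m : ℕ) : (List.range' b (m + 1)).foldr max 0 = b + m := by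
  induction m generalizing b with
  | zero => simp
  | succ m ih => rw [List.range'_succ, List.foldr_cons, ih]; omega

theorem List.foldr_min_range' (b m c : ℕ) : (List.range' b (m + 1)).foldr min c = min b c := by
  induction m generalizing b with
  | zero => simp
  | succ m ih => rw [List.range'_succ, List.foldr_cons, ih]; omega

namespace LTree

theorem Subtree.toList_infix {s t : LTree} (h : Subtree s t) : s.toList <:+: t.toList := by
  induction h with
  | refl => exact List.infix_refl _
  | left _ ih => exact ih.trans (List.prefix_append _ _).isInfix
  | right _ ih => exact ih.trans ((List.suffix_cons _ _).trans (List.suffix_append _ _)).isInfix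

theorem sMax_of_toList_eq_range' {t : LTree} {b m : ℕ} (h : t.toList = List.range' b (m + 1)) :
    t.sMax = b + m := by
  rw [sMax, h, List.foldr_max_zero_range']

theorem sMin_of_toList_eq_range' {t : LTree} {b m : ℕ} (h : t.toList = List.range' b (m + 1)) :
    t.sMin = b := by
  rw [sMin, sMax_of_toList_eq_range' h, h, List.foldr_min_range']
  omega

theorem toList_left_eq_range' {l r : LTree} {i b m : ℕ}
    (h : (node l i r).toList = List.range' b m) :
    l.toList = List.range' b l.toList.length ∧ i = b + l.toList.length := by
  obtain ⟨k, -, hl, hr⟩ := List.range'_eq_append_iff.mp h.symm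
  obtain ⟨hi, -, -⟩ := List.range'_eq_cons_iff.mp hr.symm
  rw [hl, List.length_range']
  exact ⟨rfl, by omega⟩

end LTree

theorem indicator_Icc_mem_homSet (K : Type) [Field K] {i₁ j₁ i₂ j₂ : ℕ}
    (hi : i₂ ≤ i₁) (hj : j₂ ≤ j₁) : (Set.Icc i₁ j₂).indicator 1 ∈ HomSet K i₁ j₁ i₂ j₂ := by
  refine ⟨fun k hk => Set.indicator_of_notMem (fun hk' => hk ?_) _, fun k => ?_⟩
  · simp only [supp, Set.mem_Icc] at hk' ⊢
    omega
  · simp only [arrS, Set.indicator_apply, Set.mem_Icc, Pi.one_apply]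
    split_ifs <;> first | omega | simp

theorem exists_shortExact_Icc (K : Type) [Field K] {t j s : ℕ} (htj : t ≤ j + 1) (hjs : j ≤ s) :
    ∃ f g : ℕ → K, f ∈ HomSet K (j + 1) s t s ∧ g ∈ HomSet K t s t j ∧
      (∀ k, supp (j + 1) s k → f k ≠ 0) ∧ (∀ k, supp t j k → g k ≠ 0) ∧
      (∀ k, g k * f k = 0) ∧ (∀ k, supp t s k → supp (j + 1) s k ∨ supp t j k) := by
  refine ⟨(Set.Icc (j + 1) s).indicator 1, (Set.Icc t j).indicator 1,
    indicator_Icc_mem_homSet K htj le_rfl, indicator_Icc_mem_homSet K le_rfl hjs,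
    fun k hk => by simp [Set.indicator_of_mem (show k ∈ Set.Icc _ _ from hk)],
    fun k hk => by simp [Set.indicator_of_mem (show k ∈ Set.Icc _ _ from hk)],
    fun k => ?_, fun k hk => ?_⟩
  · simp only [Set.indicator_apply, Set.mem_Icc, Pi.one_apply]
    split_ifs <;> first | omega | simp
  · simp only [supp] at hk ⊢
    omega

/-- Let `T` be an in-order labeled binary search tree on `{1,…,n}`.  For a vertex
labeled `i`, set `T(i) = M(t_i, s_i)` (minimal and maximal labels of its subtree)
and `Δ(i) = M(i, s_i)`.  If the vertex labeled `i` has a left child labeled `j`,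
then `t_j = t_i`, `s_j = i - 1`, and there is a short exact sequence
`0 → Δ(i) → T(i) → T(j) → 0`: since every vertex space of an interval
representation is `K` or `0`, this is expressed by a monomorphism `f` (nonzero
scalar on the support of `Δ(i)`), an epimorphism `g` (nonzero scalar on the
support of `T(j)`), with `g ∘ f = 0` and the support of `T(i)` covered by the
supports of `Δ(i)` and `T(j)`. -/
theorem stmt10 (K : Type) [Field K] (n : ℕ) (T l ll lr r : LTree) (i j : ℕ)
    (hT : T.toList = List.range' 1 n)
    (hsub : LTree.Subtree (.node l i r) T) (hl : l = .node ll j lr) :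
    LTree.sMin l = LTree.sMin (LTree.node l i r) ∧ LTree.sMax l = i - 1 ∧
    ∃ f g : ℕ → K,
      f ∈ HomSet K i (LTree.sMax (LTree.node l i r))
            (LTree.sMin (LTree.node l i r)) (LTree.sMax (LTree.node l i r)) ∧
      g ∈ HomSet K (LTree.sMin (LTree.node l i r)) (LTree.sMax (LTree.node l i r))
            (LTree.sMin l) (LTree.sMax l) ∧
      (∀ k, supp i (LTree.sMax (LTree.node l i r)) k → f k ≠ 0) ∧
      (∀ k, supp (LTree.sMin l) (LTree.sMax l) k → g k ≠ 0) ∧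
      (∀ k, g k * f k = 0) ∧
      (∀ k, supp (LTree.sMin (LTree.node l i r)) (LTree.sMax (LTree.node l i r)) k →
        supp i (LTree.sMax (LTree.node l i r)) k ∨ supp (LTree.sMin l) (LTree.sMax l) k) := by
  obtain ⟨b, hb⟩ := (hT ▸ hsub.toList_infix).exists_eq_range'
  obtain ⟨hlb, hi⟩ := LTree.toList_left_eq_range' hb
  obtain ⟨p, hp⟩ : ∃ p, l.toList.length = p + 1 := by
    subst hl
    exact ⟨ll.toList.length + lr.toList.length, by simp [LTree.toList]; omega⟩
  have hlen : (LTree.node l i r).toList.length = (p + 1 + r.toList.length) + 1 := by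
    simp only [LTree.toList, List.length_append, List.length_cons, hp]
    omega
  rw [hp] at hlb
  rw [hlen] at hb
  rw [LTree.sMin_of_toList_eq_range' hlb, LTree.sMax_of_toList_eq_range' hlb,
    LTree.sMin_of_toList_eq_range' hb, LTree.sMax_of_toList_eq_range' hb]
  refine ⟨rfl, by omega, ?_⟩
  obtain rfl : i = b + p + 1 := by omega
  exact exists_shortExact_Icc K (by omega) (by omega)
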